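/- Let N ≥ 1 be an integer and z₁, …, z_N ∈ ℝ, and set z̄ = N^{−1}·Σ_{i=1}^{N} z_i. Then Σ_{k=1}^{N} (Σ_{j=1}^{N} cot((k − j + 1/2)·π/N)·z_j)² = N²·Σ_{i=1}^{N} (z_i − z̄)². Moreover, for N ≥ 2, Σ_{k=1}^{N} (Σ_{j=1, j≠k}^{N} cot((k − j)·π/N)·z_j)² ≤ N²·Σ_{i=1}^{N} (z_i − z̄)². -/

import Mathlib

open Real Finset

/-! ### Complex-algebraic preliminaries -/

private lemma wgeom (ζ : ℂ) : ∀ n : ℕ, (1 - ζ) * ∑ t ∈ range n, (t : ℂ) * ζ ^ t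
    = (∑ t ∈ range n, ζ ^ t) - 1 - ((n : ℂ) - 1) * ζ ^ n := by
  intro n
  induction n with
  | zero => simp
  | succ n ih =>
    rw [sum_range_succ, sum_range_succ (fun t => ζ ^ t)]
    push_cast
    ring_nf
    ring_nf at ih
    linear_combination ih

private lemma geom_eq_zero {N : ℕ} {ζ : ℂ} (hζ : ζ ^ N = 1) (h1 : ζ ≠ 1) :
    ∑ t ∈ range N, ζ ^ t = 0 := by
  have h := geom_sum_mul ζ N
  rw [hζ, sub_self] at h
  exact (mul_eq_zero.mp h).resolve_right (sub_ne_zero.mpr h1)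

private lemma wgeom_root {N : ℕ} {ζ : ℂ} (hζ : ζ ^ N = 1) (h1 : ζ ≠ 1) :
    (1 - ζ) * ∑ t ∈ range N, (t : ℂ) * ζ ^ t = -N := by
  rw [wgeom, geom_eq_zero hζ h1, hζ]; ring

private lemma geom_neg_one {N : ℕ} {ζ : ℂ} (hζ : ζ ^ N = -1) :
    (1 - ζ) * ∑ t ∈ range N, ζ ^ t = 2 := by
  have h := geom_sum_mul ζ N
  rw [hζ] at h
  linear_combination -h

private lemma alg_cot (a b : ℂ) (h1 : a^2 + b^2 = 1) :
    (1 - ((b^2 - a^2) + (2*a*b) * Complex.I)) * (a + b * Complex.I) = 2 * a := by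
  linear_combination (-2*a*b^2) * Complex.I_sq + (a - b*Complex.I) * h1

private lemma base_cot (θ : ℝ) (h : Real.sin θ ≠ 0) :
    (1 - Complex.exp ((2*θ : ℝ) * Complex.I)) * (1 + (Real.cot θ : ℝ) * Complex.I) = 2 := by
  have ha : ((Real.sin θ : ℝ) : ℂ) ≠ 0 := Complex.ofReal_ne_zero.mpr h
  have h1 : ((Real.sin θ : ℝ) : ℂ)^2 + ((Real.cos θ : ℝ) : ℂ)^2 = 1 := by
    have := congrArg (Complex.ofReal) (Real.sin_sq_add_cos_sq θ)
    push_cast at this ⊢; exact_mod_cast this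
  have key := alg_cot _ _ h1
  have hexp : Complex.exp ((2*θ : ℝ) * Complex.I)
      = ((Real.cos θ:ℝ):ℂ)^2 - ((Real.sin θ:ℝ):ℂ)^2
        + (2*((Real.sin θ:ℝ):ℂ)*((Real.cos θ:ℝ):ℂ)) * Complex.I := by
    rw [Complex.exp_mul_I,
      show Complex.cos ((2*θ : ℝ)) = ((Real.cos (2*θ) : ℝ) : ℂ) from (Complex.ofReal_cos _).symm,
      show Complex.sin ((2*θ : ℝ)) = ((Real.sin (2*θ) : ℝ) : ℂ) from (Complex.ofReal_sin _).symm,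
      Real.cos_two_mul', Real.sin_two_mul]
    push_cast; ring
  have h2 : (1 + ((Real.cot θ : ℝ):ℂ) * Complex.I)
      = (((Real.sin θ:ℝ):ℂ) + ((Real.cos θ:ℝ):ℂ) * Complex.I) / ((Real.sin θ:ℝ):ℂ) := by
    rw [Real.cot_eq_cos_div_sin, Complex.ofReal_div, div_mul_eq_mul_div, add_div, div_self ha]
  rw [hexp, h2, mul_div_assoc', div_eq_iff ha]
  linear_combination key

private lemma sum_pow_root {N : ℕ} (hN : 1 ≤ N) (s : ℕ) :
    ∑ m ∈ range N, (Complex.exp (2 * (π:ℂ) * Complex.I / N)) ^ (m * s)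
      = if N ∣ s then (N:ℂ) else 0 := by
  have hprim := Complex.isPrimitiveRoot_exp N (by omega)
  set ω := Complex.exp (2 * (π:ℂ) * Complex.I / N)
  have h1 : ∀ m : ℕ, ω ^ (m * s) = (ω ^ s) ^ m := fun m => by
    rw [← pow_mul, Nat.mul_comm]
  simp_rw [h1]
  by_cases hdvd : N ∣ s
  · have : ω ^ s = 1 := (hprim.pow_eq_one_iff_dvd s).mpr hdvd
    simp [this, hdvd]
  · have hne : ω ^ s ≠ 1 := fun h => hdvd ((hprim.pow_eq_one_iff_dvd s).mp h)
    rw [geom_sum_eq hne, ← pow_mul, Nat.mul_comm s N, pow_mul, hprim.pow_eq_one]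
    simp [hdvd]

private lemma dvd_cases {N t u : ℕ} (hN : 1 ≤ N) (ht : t < N) (hu : u < N) (h : N ∣ t + u) :
    t + u = 0 ∨ t + u = N := by
  obtain ⟨q, hq⟩ := h
  have hq2 : q < 2 := by
    by_contra hh
    push_neg at hh
    have : N * 2 ≤ N * q := Nat.mul_le_mul_left N hh
    omega
  interval_cases q <;> omega

private lemma double_dvd_sum {N : ℕ} (hN : 1 ≤ N) (c : ℕ → ℂ) :
    ∑ t ∈ range N, ∑ u ∈ range N, (if N ∣ (t + u) then c (t + u) else 0)
      = c 0 + ((N:ℂ) - 1) * c N := by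
  have key : ∀ t ∈ range N, ∑ u ∈ range N, (if N ∣ (t + u) then c (t + u) else 0)
      = if t = 0 then c 0 else c N := by
    intro t ht
    rw [mem_range] at ht
    by_cases ht0 : t = 0
    · subst ht0
      rw [if_pos rfl]
      apply Finset.sum_eq_single 0
      · intro u hu hu0
        rw [mem_range] at hu
        rw [if_neg]
        intro hdvd
        rcases dvd_cases hN (by omega) hu hdvd <;> omega
      · intro h; exact absurd (mem_range.mpr (by omega)) h
    · rw [if_neg ht0]
      have hs := Finset.sum_eq_single (s := range N)
        (f := fun u => if N ∣ t + u then c (t + u) else 0) (N - t)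
        (by
          intro u hu hu0
          rw [mem_range] at hu
          rw [if_neg]
          intro hdvd
          rcases dvd_cases hN ht hu hdvd <;> omega)
        (by intro h; exact absurd (mem_range.mpr (by omega)) h)
      rw [hs]
      have htN : t + (N - t) = N := by omega
      rw [htN, if_pos dvd_rfl]
  rw [Finset.sum_congr rfl key]
  have : ∀ t ∈ range N, (if t = 0 then c 0 else c N)
      = (if t = 0 then c 0 - c N else 0) + c N := by
    intro t _; by_cases h : t = 0 <;> simp [h]
  rw [Finset.sum_congr rfl this, Finset.sum_add_distrib, Finset.sum_ite_eq' (range N) 0,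
    if_pos (mem_range.mpr (by omega)), Finset.sum_const, Finset.card_range]
  ring

private lemma sum_range_cast (n : ℕ) : ∑ t ∈ range n, (t:ℂ) = n*((n:ℂ)-1)/2 := by
  induction n with
  | zero => simp
  | succ n ih => rw [Finset.sum_range_succ, ih]; push_cast; ring

private lemma sum_range_sq_cast (n : ℕ) : ∑ t ∈ range n, (t:ℂ)^2 = n*((n:ℂ)-1)*(2*n-1)/6 := by
  induction n with
  | zero => simp
  | succ n ih => rw [Finset.sum_range_succ, ih]; push_cast; ring

private lemma double_dvd_sum' {N : ℕ} (hN : 1 ≤ N) :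
    ∑ t ∈ range N, ∑ u ∈ range N, (if N ∣ (t + u) then ((t:ℂ)*(u:ℂ)*(N:ℂ)) else 0)
      = (N:ℂ) * ((N:ℂ)*((N:ℂ)-1)*((N:ℂ)+1)/6) := by
  have key : ∀ t ∈ range N, ∑ u ∈ range N, (if N ∣ (t + u) then ((t:ℂ)*(u:ℂ)*(N:ℂ)) else 0)
      = (t:ℂ)*((N:ℂ)-(t:ℂ))*(N:ℂ) := by
    intro t ht
    rw [mem_range] at ht
    by_cases ht0 : t = 0
    · subst ht0
      have hs := Finset.sum_eq_single (s := range N)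
        (f := fun u => if N ∣ (0 + u) then ((0:ℂ)*(u:ℂ)*(N:ℂ)) else 0) 0
        (by
          intro u hu hu0
          rw [mem_range] at hu
          rw [if_neg]
          intro hdvd
          rcases dvd_cases hN (by omega) hu hdvd <;> omega)
        (by intro h; exact absurd (mem_range.mpr (by omega)) h)
      simp only [Nat.cast_zero] at hs ⊢
      rw [hs]
      simp
    · have hs := Finset.sum_eq_single (s := range N)
        (f := fun u => if N ∣ (t + u) then ((t:ℂ)*(u:ℂ)*(N:ℂ)) else 0) (N - t)
        (by
          intro u hu hu0
          rw [mem_range] at hu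
          rw [if_neg]
          intro hdvd
          rcases dvd_cases hN ht hu hdvd <;> omega)
        (by intro h; exact absurd (mem_range.mpr (by omega)) h)
      rw [show t + (N - t) = N by omega] at hs
      rw [hs, if_pos dvd_rfl]
      have : ((N - t : ℕ):ℂ) = (N:ℂ) - (t:ℂ) := by
        push_cast [Nat.cast_sub (by omega : t ≤ N)]
        ring
      rw [this]
  rw [Finset.sum_congr rfl key]
  have expand : ∀ t ∈ range N, (t:ℂ)*((N:ℂ)-(t:ℂ))*(N:ℂ)
      = (N:ℂ)*((N:ℂ)*(t:ℂ)) - (N:ℂ)*((t:ℂ)^2) := by intro t _; ring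
  rw [Finset.sum_congr rfl expand, Finset.sum_sub_distrib, ← Finset.mul_sum, ← Finset.mul_sum,
    ← Finset.mul_sum, sum_range_cast, sum_range_sq_cast]
  ring

private lemma sq_one_add_mul_I (c : ℝ) :
    ((1:ℂ) + (c:ℝ) * Complex.I)^2 = ((1 - c^2 : ℝ):ℂ) + ((2*c : ℝ):ℂ) * Complex.I := by
  push_cast
  linear_combination (c:ℂ)^2 * Complex.I_sq

private lemma F1 (hN : 1 ≤ N) :
    ∑ m ∈ range N, (Real.cot (((m:ℝ) + 1/2) * π / N)) ^ 2 = (N:ℝ)^2 - N := by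
  have hNR : (N:ℝ) ≠ 0 := Nat.cast_ne_zero.mpr (by omega)
  set ρ : ℂ := Complex.exp ((π:ℂ) * Complex.I / N) with hρ
  set θ : ℕ → ℝ := fun m => ((m:ℝ) + 1/2) * π / N with hθ
  have hNC : (N:ℂ) ≠ 0 := Nat.cast_ne_zero.mpr (by omega)
  have hρ2 : ρ^2 = Complex.exp (2 * (π:ℂ) * Complex.I / N) := by
    rw [hρ, ← Complex.exp_nat_mul]; congr 1; push_cast; ring
  have hρN : ρ^N = -1 := by
    rw [hρ, ← Complex.exp_nat_mul,
      show (N:ℂ) * ((π:ℂ) * Complex.I / N) = (π:ℂ) * Complex.I by field_simp]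
    exact Complex.exp_pi_mul_I
  have hζ : ∀ m : ℕ, ρ^(2*m+1) = Complex.exp ((2 * θ m : ℝ) * Complex.I) := by
    intro m
    rw [hρ, ← Complex.exp_nat_mul]
    congr 1
    rw [hθ]
    push_cast
    field_simp
  have hsin : ∀ m ∈ range N, Real.sin (θ m) ≠ 0 := by
    intro m hm
    rw [mem_range] at hm
    have h1 : 0 < θ m := by
      rw [hθ]
      have := Real.pi_pos
      positivity
    have h2 : θ m < π := by
      rw [hθ]
      rw [div_lt_iff₀ (by positivity)]
      have hm' : (m:ℝ) + 1/2 < N := by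
        have : (m:ℝ) ≤ N - 1 := by
          have : (m:ℝ) + 1 ≤ N := by exact_mod_cast Nat.succ_le_of_lt hm
          linarith
        linarith
      nlinarith [Real.pi_pos]
    exact ne_of_gt (Real.sin_pos_of_pos_of_lt_pi h1 h2)
  have hg : ∀ m ∈ range N, ∑ t ∈ range N, (ρ^(2*m+1))^t
      = 1 + ((Real.cot (θ m) : ℝ):ℂ) * Complex.I := by
    intro m hm
    have hpow : (ρ^(2*m+1))^N = -1 := by
      rw [← pow_mul, Nat.mul_comm, pow_mul, hρN]
      exact Odd.neg_one_pow ⟨m, by ring⟩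
    have h2 := geom_neg_one hpow
    have hb := base_cot (θ m) (hsin m hm)
    rw [← hζ m] at hb
    have hne : (1:ℂ) - ρ^(2*m+1) ≠ 0 := by
      intro h
      rw [h, zero_mul] at h2
      exact two_ne_zero h2.symm
    exact mul_left_cancel₀ hne (h2.trans hb.symm)
  -- way B : evaluate the sum of squares via roots of unity
  have wayB : ∑ m ∈ range N, (∑ t ∈ range N, (ρ^(2*m+1))^t)^2
      = (N:ℂ) + ((N:ℂ) - 1) * (-(N:ℂ)) := by
    have expand : ∀ m : ℕ, (∑ t ∈ range N, (ρ^(2*m+1))^t)^2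
        = ∑ t ∈ range N, ∑ u ∈ range N,
            ρ^(t+u) * (Complex.exp (2 * (π:ℂ) * Complex.I / N))^(m*(t+u)) := by
      intro m
      rw [sq, Finset.sum_mul_sum]
      apply Finset.sum_congr rfl; intro t _
      apply Finset.sum_congr rfl; intro u _
      rw [← hρ2, ← pow_mul, ← pow_mul, ← pow_add, ← pow_mul, ← pow_add]
      congr 1
      ring
    rw [Finset.sum_congr rfl (fun m _ => expand m)]
    rw [Finset.sum_comm]
    have swap2 : ∀ t ∈ range N, (∑ m ∈ range N, ∑ u ∈ range N,
          ρ^(t+u) * (Complex.exp (2 * (π:ℂ) * Complex.I / N))^(m*(t+u)))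
        = ∑ u ∈ range N, (if N ∣ (t+u) then ρ^(t+u) * N else 0) := by
      intro t _
      rw [Finset.sum_comm]
      apply Finset.sum_congr rfl; intro u _
      rw [← Finset.mul_sum, sum_pow_root hN, mul_ite, mul_zero]
    rw [Finset.sum_congr rfl swap2, double_dvd_sum hN (fun s => ρ^s * N), pow_zero, hρN]
    ring
  -- way A : rewrite each summand via cot
  have wayA : ∑ m ∈ range N, (∑ t ∈ range N, (ρ^(2*m+1))^t)^2
      = ((∑ m ∈ range N, (1 - Real.cot (θ m)^2) : ℝ):ℂ)
        + ((∑ m ∈ range N, 2 * Real.cot (θ m) : ℝ):ℂ) * Complex.I := by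
    rw [Finset.sum_congr rfl (fun m hm => by rw [hg m hm, sq_one_add_mul_I])]
    rw [Finset.sum_add_distrib, ← Finset.sum_mul]
    push_cast
    ring
  rw [wayA] at wayB
  have hre := congrArg Complex.re wayB
  simp only [Complex.add_re, Complex.ofReal_re, Complex.mul_re, Complex.I_re, Complex.I_im,
    Complex.ofReal_im, Complex.mul_im, Complex.sub_re, Complex.neg_re, Complex.natCast_re,
    Complex.one_re, Complex.sub_im, Complex.neg_im, Complex.natCast_im, Complex.one_im,
    mul_zero, zero_mul, sub_zero, neg_zero, mul_one, add_zero, zero_sub, zero_add] at hre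
  have hsub : ∑ m ∈ range N, (1 - Real.cot (θ m)^2)
      = (N:ℝ) - ∑ m ∈ range N, Real.cot (θ m)^2 := by
    rw [Finset.sum_sub_distrib, Finset.sum_const, Finset.card_range, nsmul_eq_mul, mul_one]
  linear_combination hsub - hre

private lemma F2 (hN : 1 ≤ N) :
    ∑ m ∈ range N, (Real.cot ((m:ℝ) * π / N)) ^ 2 = ((N:ℝ)-1)*((N:ℝ)-2)/3 := by
  have hNR : (N:ℝ) ≠ 0 := Nat.cast_ne_zero.mpr (by omega)
  have hNC : (N:ℂ) ≠ 0 := Nat.cast_ne_zero.mpr (by omega)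
  have hprim := Complex.isPrimitiveRoot_exp N (by omega)
  set ω : ℂ := Complex.exp (2 * (π:ℂ) * Complex.I / N) with hω
  set θ : ℕ → ℝ := fun m => (m:ℝ) * π / N with hθ
  have hωN : ω^N = 1 := hprim.pow_eq_one
  have hζ : ∀ m : ℕ, ω^m = Complex.exp ((2 * θ m : ℝ) * Complex.I) := by
    intro m
    rw [hω, ← Complex.exp_nat_mul]
    congr 1
    rw [hθ]
    push_cast
    field_simp
  have hsin : ∀ m ∈ Ico 1 N, Real.sin (θ m) ≠ 0 := by
    intro m hm
    rw [mem_Ico] at hm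
    have h1 : 0 < θ m := by
      rw [hθ]
      have := Real.pi_pos
      have : (0:ℝ) < m := by exact_mod_cast Nat.pos_of_ne_zero (by omega)
      positivity
    have h2 : θ m < π := by
      rw [hθ, div_lt_iff₀ (by positivity)]
      have hm' : (m:ℝ) < N := by exact_mod_cast hm.2
      nlinarith [Real.pi_pos]
    exact ne_of_gt (Real.sin_pos_of_pos_of_lt_pi h1 h2)
  have hS : ∀ m ∈ Ico 1 N, ∑ t ∈ range N, (t:ℂ) * (ω^m)^t
      = (-(N:ℂ)/2) * (1 + ((Real.cot (θ m) : ℝ):ℂ) * Complex.I) := by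
    intro m hm
    rw [mem_Ico] at hm
    have hpow : (ω^m)^N = 1 := by rw [← pow_mul, Nat.mul_comm, pow_mul, hωN, one_pow]
    have hne1 : ω^m ≠ 1 := hprim.pow_ne_one_of_pos_of_lt (by omega) hm.2
    have h2 := wgeom_root hpow hne1
    have hb := base_cot (θ m) (hsin m (mem_Ico.mpr hm))
    rw [← hζ m] at hb
    have hne : (1:ℂ) - ω^m ≠ 0 := by
      intro h
      rw [h, zero_mul] at hb
      exact two_ne_zero hb.symm
    apply mul_left_cancel₀ hne
    rw [h2]
    rw [show (1 - ω^m) * ((-(N:ℂ)/2) * (1 + ((Real.cot (θ m) : ℝ):ℂ) * Complex.I))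
        = (-(N:ℂ)/2) * ((1 - ω^m) * (1 + ((Real.cot (θ m) : ℝ):ℂ) * Complex.I)) by ring, hb]
    ring
  -- way B
  have wayB : ∑ m ∈ Ico 1 N, (∑ t ∈ range N, (t:ℂ) * (ω^m)^t)^2
      = (N:ℂ) * ((N:ℂ)*((N:ℂ)-1)*((N:ℂ)+1)/6) - ((N:ℂ)*((N:ℂ)-1)/2)^2 := by
    have expand : ∀ m : ℕ, (∑ t ∈ range N, (t:ℂ) * (ω^m)^t)^2
        = ∑ t ∈ range N, ∑ u ∈ range N, (t:ℂ)*(u:ℂ) * ω^(m*(t+u)) := by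
      intro m
      rw [sq, Finset.sum_mul_sum]
      apply Finset.sum_congr rfl; intro t _
      apply Finset.sum_congr rfl; intro u _
      rw [← pow_mul, ← pow_mul, mul_mul_mul_comm, ← pow_add]
      congr 2
      ring
    rw [Finset.sum_congr rfl (fun m _ => expand m)]
    rw [Finset.sum_comm]
    have swap2 : ∀ t ∈ range N, (∑ m ∈ Ico 1 N, ∑ u ∈ range N, (t:ℂ)*(u:ℂ) * ω^(m*(t+u)))
        = ∑ u ∈ range N, ((if N ∣ (t+u) then ((t:ℂ)*(u:ℂ)*(N:ℂ)) else 0) - (t:ℂ)*(u:ℂ)) := by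
      intro t _
      rw [Finset.sum_comm]
      apply Finset.sum_congr rfl; intro u _
      have hsplit : ∑ m ∈ range N, (t:ℂ)*(u:ℂ) * ω^(m*(t+u))
          = (t:ℂ)*(u:ℂ) * ω^(0*(t+u)) + ∑ m ∈ Ico 1 N, (t:ℂ)*(u:ℂ) * ω^(m*(t+u)) := by
        rw [Finset.range_eq_Ico, Finset.sum_eq_sum_Ico_succ_bot (by omega : 0 < N)]
      have hval : ∑ m ∈ range N, (t:ℂ)*(u:ℂ) * ω^(m*(t+u))
          = (t:ℂ)*(u:ℂ) * (if N ∣ (t+u) then (N:ℂ) else 0) := by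
        rw [← Finset.mul_sum, sum_pow_root hN]
      rw [hval, Nat.zero_mul, pow_zero, mul_one] at hsplit
      have hif : (t:ℂ)*(u:ℂ)*(if N ∣ (t+u) then (N:ℂ) else 0)
          = (if N ∣ (t+u) then ((t:ℂ)*(u:ℂ)*(N:ℂ)) else 0) := by
        by_cases h : N ∣ (t+u) <;> simp [h]
      rw [hif] at hsplit
      linear_combination -hsplit
    rw [Finset.sum_congr rfl swap2]
    have : ∀ t ∈ range N, ∑ u ∈ range N,
        ((if N ∣ (t+u) then ((t:ℂ)*(u:ℂ)*(N:ℂ)) else 0) - (t:ℂ)*(u:ℂ))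
        = (∑ u ∈ range N, (if N ∣ (t+u) then ((t:ℂ)*(u:ℂ)*(N:ℂ)) else 0))
          - (t:ℂ) * ∑ u ∈ range N, (u:ℂ) := by
      intro t _
      rw [Finset.sum_sub_distrib, ← Finset.mul_sum]
    rw [Finset.sum_congr rfl this, Finset.sum_sub_distrib, double_dvd_sum' hN,
      ← Finset.sum_mul, sum_range_cast]
    ring
  -- way A
  have wayA : ∑ m ∈ Ico 1 N, (∑ t ∈ range N, (t:ℂ) * (ω^m)^t)^2
      = ((∑ m ∈ Ico 1 N, (N:ℝ)^2/4*(1 - Real.cot (θ m)^2) : ℝ):ℂ)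
        + ((∑ m ∈ Ico 1 N, (N:ℝ)^2/4*(2*Real.cot (θ m)) : ℝ):ℂ) * Complex.I := by
    have : ∀ m ∈ Ico 1 N, (∑ t ∈ range N, (t:ℂ) * (ω^m)^t)^2
        = (((N:ℝ)^2/4*(1 - Real.cot (θ m)^2) : ℝ):ℂ)
          + (((N:ℝ)^2/4*(2*Real.cot (θ m)) : ℝ):ℂ) * Complex.I := by
      intro m hm
      rw [hS m hm]
      push_cast
      linear_combination ((N:ℂ)^2*(Complex.cot ((θ m : ℝ):ℂ))^2/4) * Complex.I_sq
    rw [Finset.sum_congr rfl this, Finset.sum_add_distrib, ← Finset.sum_mul]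
    push_cast
    ring
  rw [wayA] at wayB
  -- clean up re of the complex RHS : it is a real polynomial expression in N
  have hreR : ∑ m ∈ Ico 1 N, (N:ℝ)^2/4*(1 - Real.cot (θ m)^2)
      = (N:ℝ) * ((N:ℝ)*((N:ℝ)-1)*((N:ℝ)+1)/6) - ((N:ℝ)*((N:ℝ)-1)/2)^2 := by
    have : ((N:ℂ) * ((N:ℂ)*((N:ℂ)-1)*((N:ℂ)+1)/6) - ((N:ℂ)*((N:ℂ)-1)/2)^2)
        = (((N:ℝ) * ((N:ℝ)*((N:ℝ)-1)*((N:ℝ)+1)/6) - ((N:ℝ)*((N:ℝ)-1)/2)^2 : ℝ):ℂ) := by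
      push_cast
      ring
    rw [this] at wayB
    have := congrArg Complex.re wayB
    simp only [Complex.add_re, Complex.ofReal_re, Complex.mul_re, Complex.I_re, Complex.I_im,
      Complex.ofReal_im, mul_zero, zero_mul, sub_zero, add_zero] at this
    exact this
  -- extract the cot² sum
  have hsum : ∑ m ∈ Ico 1 N, (N:ℝ)^2/4*(1 - Real.cot (θ m)^2)
      = (N:ℝ)^2/4 * ((N:ℝ) - 1) - (N:ℝ)^2/4 * ∑ m ∈ Ico 1 N, Real.cot (θ m)^2 := by
    rw [← Finset.mul_sum, Finset.sum_sub_distrib, Finset.sum_const, Nat.card_Ico,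
      nsmul_eq_mul, mul_one]
    have : ((N - 1 : ℕ):ℝ) = (N:ℝ) - 1 := by
      push_cast [Nat.cast_sub (by omega : 1 ≤ N)]
      ring
    rw [this]
    ring
  have h6 := hsum.symm.trans hreR
  have hfin : (N:ℝ)^2 * ∑ m ∈ Ico 1 N, Real.cot (θ m)^2
      = (N:ℝ)^2 * (((N:ℝ)-1)*((N:ℝ)-2)/3) := by linear_combination -4*h6
  have hIco : ∑ m ∈ Ico 1 N, Real.cot (θ m)^2 = ((N:ℝ)-1)*((N:ℝ)-2)/3 :=
    mul_left_cancel₀ (pow_ne_zero 2 hNR) hfin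
  calc ∑ m ∈ range N, Real.cot ((m:ℝ) * π / N)^2
      = ∑ m ∈ Ico 1 N, Real.cot ((m:ℝ) * π / N)^2 := by
        rw [Finset.range_eq_Ico, Finset.sum_eq_sum_Ico_succ_bot (by omega : 0 < N)]
        norm_num [Real.cot_eq_cos_div_sin]
    _ = ((N:ℝ)-1)*((N:ℝ)-2)/3 := hIco

noncomputable def ccot (N : ℕ) (x : ZMod N) : ℝ := Real.cot (((x.val : ℝ) + 1/2) * π / N)
noncomputable def dcot (N : ℕ) (x : ZMod N) : ℝ := Real.cot ((x.val : ℝ) * π / N)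

lemma cot_add_int_mul_pi (x : ℝ) (t : ℤ) : Real.cot (x + t * π) = Real.cot x := by
  rw [Real.cot_eq_cos_div_sin, Real.cot_eq_cos_div_sin, Real.cos_add_int_mul_pi,
    Real.sin_add_int_mul_pi, mul_div_mul_left _ _ (by positivity : ((-1:ℝ))^t ≠ 0)]

lemma cot_shift {N : ℕ} (hN : 1 ≤ N) (a b : ℝ) (t : ℤ) (h : a = b + t * N) :
    Real.cot (a * π / N) = Real.cot (b * π / N) := by
  have hNR : (N:ℝ) ≠ 0 := Nat.cast_ne_zero.mpr (by omega)
  have : a * π / N = b * π / N + t * π := by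
    rw [h]; field_simp
  rw [this, cot_add_int_mul_pi]

lemma sin_shift_ne {N : ℕ} (hN : 1 ≤ N) (a b : ℝ) (t : ℤ) (h : a = b + t * N)
    (hb : Real.sin (b * π / N) ≠ 0) : Real.sin (a * π / N) ≠ 0 := by
  have hNR : (N:ℝ) ≠ 0 := Nat.cast_ne_zero.mpr (by omega)
  have : a * π / N = b * π / N + t * π := by
    rw [h]; field_simp
  rw [this, Real.sin_add_int_mul_pi]
  intro hc
  rcases mul_eq_zero.mp hc with h1 | h1
  · exact (by positivity : ((-1:ℝ))^t ≠ 0) h1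
  · exact hb h1

-- the main bridge : the cotangent in the theorem statement equals ccot of the ZMod difference
lemma cot_stmt_eq_ccot {N : ℕ} (hN : 1 ≤ N) (k j : Fin N) :
    Real.cot ((((k : ℕ) : ℝ) - ((j : ℕ) : ℝ) + 1/2) * π / (N : ℝ))
      = ccot N (((k:ℕ) : ZMod N) - ((j:ℕ) : ZMod N)) := by
  haveI : NeZero N := ⟨by omega⟩
  set d : ZMod N := ((k:ℕ) : ZMod N) - ((j:ℕ) : ZMod N) with hd
  have hcast : ((((k:ℕ) : ℤ) - ((j:ℕ) : ℤ) : ℤ) : ZMod N) = d := by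
    push_cast [hd]; ring
  have hval : ((d.val : ℤ)) = (((k:ℕ) : ℤ) - ((j:ℕ) : ℤ)) % N := by
    rw [← hcast, ZMod.val_intCast]
  obtain ⟨t, ht⟩ : ∃ t : ℤ, ((k:ℕ):ℤ) - ((j:ℕ):ℤ) - d.val = t * N := by
    refine ⟨(((k:ℕ):ℤ) - ((j:ℕ):ℤ)) / N, ?_⟩
    rw [hval]
    rw [Int.emod_def]
    ring
  rw [ccot]
  apply cot_shift hN _ _ t
  have : (((k:ℕ):ℝ) - ((j:ℕ):ℝ)) - (d.val : ℝ) = (t:ℝ) * N := by exact_mod_cast congrArg (Int.cast : ℤ → ℝ) ht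
  linarith [this]

lemma cot_stmt_eq_dcot {N : ℕ} (hN : 1 ≤ N) (k j : Fin N) :
    Real.cot ((((k : ℕ) : ℝ) - ((j : ℕ) : ℝ)) * π / (N : ℝ))
      = dcot N (((k:ℕ) : ZMod N) - ((j:ℕ) : ZMod N)) := by
  haveI : NeZero N := ⟨by omega⟩
  set d : ZMod N := ((k:ℕ) : ZMod N) - ((j:ℕ) : ZMod N) with hd
  have hcast : ((((k:ℕ) : ℤ) - ((j:ℕ) : ℤ) : ℤ) : ZMod N) = d := by
    push_cast [hd]; ring
  have hval : ((d.val : ℤ)) = (((k:ℕ) : ℤ) - ((j:ℕ) : ℤ)) % N := by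
    rw [← hcast, ZMod.val_intCast]
  obtain ⟨t, ht⟩ : ∃ t : ℤ, ((k:ℕ):ℤ) - ((j:ℕ):ℤ) - d.val = t * N := by
    refine ⟨(((k:ℕ):ℤ) - ((j:ℕ):ℤ)) / N, ?_⟩
    rw [hval, Int.emod_def]
    ring
  rw [dcot]
  apply cot_shift hN _ _ t
  have : (((k:ℕ):ℝ) - ((j:ℕ):ℝ)) - (d.val : ℝ) = (t:ℝ) * N := by exact_mod_cast congrArg (Int.cast : ℤ → ℝ) ht
  linarith [this]

-- sums over Fin N via ZMod N
lemma sum_fin_zmod {N : ℕ} [NeZero N] (f : ZMod N → ℝ) :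
    ∑ k : Fin N, f ((k:ℕ) : ZMod N) = ∑ x : ZMod N, f x := by
  apply Fintype.sum_bijective (fun k : Fin N => ((k:ℕ) : ZMod N))
  · rw [Fintype.bijective_iff_injective_and_card]
    constructor
    · intro a b hab
      dsimp only at hab
      have : ((a:ℕ) : ZMod N).val = ((b:ℕ) : ZMod N).val := by rw [hab]
      rw [ZMod.val_cast_of_lt a.2, ZMod.val_cast_of_lt b.2] at this
      exact Fin.ext this
    · rw [ZMod.card, Fintype.card_fin]
  · intro k; rfl

lemma sum_zmod_range {N : ℕ} [NeZero N] (f : ℕ → ℝ) :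
    ∑ x : ZMod N, f x.val = ∑ m ∈ range N, f m := by
  rw [← sum_fin_zmod (fun x => f x.val)]
  rw [← Fin.sum_univ_eq_sum_range]
  apply Finset.sum_congr rfl
  intro k _
  rw [ZMod.val_cast_of_lt k.2]

-- cot product identity
lemma cot_mul_cot (A B : ℝ) (hA : Real.sin A ≠ 0) (hB : Real.sin B ≠ 0)
    (hAB : Real.sin (B - A) ≠ 0) :
    Real.cot A * Real.cot B = Real.cot (B - A) * (Real.cot A - Real.cot B) - 1 := by
  rw [Real.cot_eq_cos_div_sin, Real.cot_eq_cos_div_sin, Real.cot_eq_cos_div_sin,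
    Real.sin_sub, Real.cos_sub]
  rw [Real.sin_sub] at hAB
  have hAB' : Real.cos A * Real.sin B - Real.cos B * Real.sin A ≠ 0 := by
    intro h; apply hAB; linear_combination h
  field_simp
  ring_nf
  field_simp
  ring

section
variable {N : ℕ} [NeZero N]

lemma hN1 : 1 ≤ N := Nat.one_le_iff_ne_zero.mpr (NeZero.ne N)

lemma sin_c_ne (x : ZMod N) : Real.sin (((x.val : ℝ) + 1/2) * π / N) ≠ 0 := by
  have hN : 1 ≤ N := hN1
  have h1 : (0:ℝ) < ((x.val : ℝ) + 1/2) * π / N := by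
    have := Real.pi_pos
    positivity
  have h2 : ((x.val : ℝ) + 1/2) * π / N < π := by
    rw [div_lt_iff₀ (by exact_mod_cast Nat.pos_of_ne_zero (NeZero.ne N))]
    have : (x.val : ℝ) + 1/2 < N := by
      have := x.val_lt
      have : (x.val : ℝ) + 1 ≤ N := by exact_mod_cast this
      linarith
    nlinarith [Real.pi_pos]
  exact ne_of_gt (Real.sin_pos_of_pos_of_lt_pi h1 h2)

lemma sin_d_ne {x : ZMod N} (hx : x ≠ 0) : Real.sin ((x.val : ℝ) * π / N) ≠ 0 := by
  have hN : 1 ≤ N := hN1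
  have hv : 1 ≤ x.val := Nat.pos_of_ne_zero (fun h => hx (by rwa [← ZMod.val_eq_zero]))
  have h1 : (0:ℝ) < (x.val : ℝ) * π / N := by
    have := Real.pi_pos
    have : (0:ℝ) < (x.val : ℝ) := by exact_mod_cast hv
    positivity
  have h2 : (x.val : ℝ) * π / N < π := by
    rw [div_lt_iff₀ (by exact_mod_cast Nat.pos_of_ne_zero (NeZero.ne N))]
    have : (x.val : ℝ) < N := by exact_mod_cast x.val_lt
    nlinarith [Real.pi_pos]
  exact ne_of_gt (Real.sin_pos_of_pos_of_lt_pi h1 h2)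

lemma val_add_shift (x δ : ZMod N) :
    ∃ t : ℤ, (((x + δ).val : ℝ)) - (x.val : ℝ) = (δ.val : ℝ) + t * N := by
  have h := ZMod.val_add x δ
  refine ⟨-(((x.val + δ.val) / N : ℕ) : ℤ), ?_⟩
  have hmodz := congrArg (Nat.cast : ℕ → ℤ) (Nat.mod_add_div (x.val + δ.val) N)
  push_cast at hmodz
  have hz : ((x + δ).val : ℤ) = (x.val : ℤ) + δ.val - (N:ℤ) * (((x.val + δ.val) / N : ℕ) : ℤ) := by
    rw [h]
    push_cast
    linarith
  have hr := congrArg (Int.cast : ℤ → ℝ) hz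
  push_cast at hr
  rw [hr]
  push_cast
  ring
end

section
variable {N : ℕ} [NeZero N]

lemma hN1' : 1 ≤ N := Nat.one_le_iff_ne_zero.mpr (NeZero.ne N)

lemma dcot_zero : dcot N 0 = 0 := by
  rw [dcot, ZMod.val_zero]
  norm_num [Real.cot_eq_cos_div_sin]

lemma dcot_neg {δ : ZMod N} (hδ : δ ≠ 0) : dcot N (-δ) = -dcot N δ := by
  have hN : 1 ≤ N := hN1'
  rw [dcot, dcot, ZMod.neg_val, if_neg hδ]
  have hle : δ.val ≤ N := le_of_lt δ.val_lt
  have hcast : ((N - δ.val : ℕ) : ℝ) = (N:ℝ) - δ.val := by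
    push_cast [Nat.cast_sub hle]; ring
  rw [hcast]
  have harg : ((N:ℝ) - (δ.val:ℝ)) * π / N = π - (δ.val:ℝ) * π / N := by
    field_simp
  rw [harg, Real.cot_eq_cos_div_sin, Real.cot_eq_cos_div_sin, Real.cos_pi_sub, Real.sin_pi_sub,
    neg_div]

lemma ccot_mul (x δ : ZMod N) (hδ : δ ≠ 0) :
    ccot N x * ccot N (x + δ) = dcot N δ * (ccot N x - ccot N (x + δ)) - 1 := by
  have hN : 1 ≤ N := hN1'
  obtain ⟨t, ht⟩ := val_add_shift x δ
  set A : ℝ := ((x.val : ℝ) + 1/2) * π / N with hA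
  set B : ℝ := (((x + δ).val : ℝ) + 1/2) * π / N with hB
  have hBA : B - A = ((((x + δ).val : ℝ)) - (x.val : ℝ)) * π / N := by
    rw [hA, hB]; ring
  have hsA := sin_c_ne x
  have hsB := sin_c_ne (x + δ)
  have hsBA : Real.sin (B - A) ≠ 0 := by
    rw [hBA]
    exact sin_shift_ne hN _ _ t ht (sin_d_ne hδ)
  have hcotBA : Real.cot (B - A) = dcot N δ := by
    rw [hBA, dcot]
    exact cot_shift hN _ _ t ht
  rw [ccot, ccot, ← hA, ← hB, cot_mul_cot A B hsA hsB hsBA, hcotBA]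

lemma dcot_mul (x δ : ZMod N) (hδ : δ ≠ 0) (hx : x ≠ 0) (hxδ : x + δ ≠ 0) :
    dcot N x * dcot N (x + δ) = dcot N δ * (dcot N x - dcot N (x + δ)) - 1 := by
  have hN : 1 ≤ N := hN1'
  obtain ⟨t, ht⟩ := val_add_shift x δ
  set A : ℝ := ((x.val : ℝ)) * π / N with hA
  set B : ℝ := (((x + δ).val : ℝ)) * π / N with hB
  have hBA : B - A = ((((x + δ).val : ℝ)) - (x.val : ℝ)) * π / N := by
    rw [hA, hB]; ring
  have hsA := sin_d_ne hx
  have hsB := sin_d_ne hxδ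
  have hsBA : Real.sin (B - A) ≠ 0 := by
    rw [hBA]
    exact sin_shift_ne hN _ _ t ht (sin_d_ne hδ)
  have hcotBA : Real.cot (B - A) = dcot N δ := by
    rw [hBA, dcot]
    exact cot_shift hN _ _ t ht
  rw [dcot, dcot, ← hA, ← hB, cot_mul_cot A B hsA hsB hsBA, hcotBA]

lemma hNpos : 1 ≤ N := Nat.one_le_iff_ne_zero.mpr (NeZero.ne N)

lemma sum_shift (g : ZMod N → ℝ) (δ : ZMod N) : ∑ x : ZMod N, g (x + δ) = ∑ x : ZMod N, g x :=
  Fintype.sum_equiv (Equiv.addRight δ) _ _ (fun _ => rfl)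

lemma G_diag : ∑ x : ZMod N, (ccot N x)^2 = (N:ℝ)^2 - N := by
  rw [show (fun x : ZMod N => (ccot N x)^2) = fun x => (Real.cot (((x.val:ℝ) + 1/2) * π / N))^2 from rfl]
  rw [sum_zmod_range (fun m => (Real.cot (((m:ℝ) + 1/2) * π / N))^2)]
  exact F1 hNpos

lemma H_diag : ∑ x : ZMod N, (dcot N x)^2 = ((N:ℝ)-1)*((N:ℝ)-2)/3 := by
  rw [show (fun x : ZMod N => (dcot N x)^2) = fun x => (Real.cot (((x.val:ℝ)) * π / N))^2 from rfl]
  rw [sum_zmod_range (fun m => (Real.cot (((m:ℝ)) * π / N))^2)]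
  exact F2 hNpos

lemma G_off {δ : ZMod N} (hδ : δ ≠ 0) :
    ∑ x : ZMod N, ccot N x * ccot N (x + δ) = -(N:ℝ) := by
  rw [Finset.sum_congr rfl (fun x _ => ccot_mul x δ hδ)]
  rw [Finset.sum_sub_distrib, ← Finset.mul_sum, Finset.sum_sub_distrib]
  rw [sum_shift (ccot N) δ]
  rw [Finset.sum_const, Finset.card_univ, ZMod.card]
  simp

lemma H_off {δ : ZMod N} (hδ : δ ≠ 0) :
    ∑ x : ZMod N, dcot N x * dcot N (x + δ) = 2*(dcot N δ)^2 - ((N:ℝ) - 2) := by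
  have hneg : -δ ≠ 0 := neg_ne_zero.mpr hδ
  have hmem1 : (0 : ZMod N) ∈ (univ : Finset (ZMod N)) := mem_univ _
  have hmem2 : -δ ∈ (univ : Finset (ZMod N)).erase 0 := by
    rw [mem_erase]; exact ⟨hneg, mem_univ _⟩
  have hNge2 : 2 ≤ N := by
    have h1 : 1 ≤ δ.val := Nat.pos_of_ne_zero (fun h => hδ (by rwa [← ZMod.val_eq_zero]))
    have h2 : δ.val < N := δ.val_lt
    omega
  set s : Finset (ZMod N) := ((univ : Finset (ZMod N)).erase 0).erase (-δ) with hs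
  have hcards : (s.card : ℝ) = (N:ℝ) - 2 := by
    rw [hs, Finset.card_erase_of_mem hmem2, Finset.card_erase_of_mem hmem1,
      Finset.card_univ, ZMod.card]
    have : N - 1 - 1 = N - 2 := by omega
    rw [this]
    push_cast [Nat.cast_sub hNge2]
    ring
  -- splitting of a full sum
  have hsplit : ∀ f : ZMod N → ℝ, ∑ x : ZMod N, f x = f 0 + f (-δ) + ∑ x ∈ s, f x := by
    intro f
    rw [← Finset.add_sum_erase _ f hmem1, ← Finset.add_sum_erase _ f hmem2, hs]
    ring
  have h1 : ∑ x ∈ s, dcot N x = (∑ x : ZMod N, dcot N x) + dcot N δ := by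
    rw [hsplit (dcot N), dcot_zero, dcot_neg hδ]
    ring
  have h2 : ∑ x ∈ s, dcot N (x + δ) = (∑ x : ZMod N, dcot N x) - dcot N δ := by
    have := hsplit (fun x => dcot N (x + δ))
    rw [sum_shift (dcot N) δ] at this
    simp only [zero_add, neg_add_cancel, dcot_zero] at this
    linarith
  have hmain : ∑ x : ZMod N, dcot N x * dcot N (x + δ)
      = ∑ x ∈ s, dcot N x * dcot N (x + δ) := by
    rw [hsplit (fun x => dcot N x * dcot N (x + δ))]
    simp only [dcot_zero, zero_mul, neg_add_cancel, mul_zero]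
    ring
  rw [hmain]
  have hterm : ∀ x ∈ s, dcot N x * dcot N (x + δ)
      = dcot N δ * (dcot N x - dcot N (x + δ)) - 1 := by
    intro x hx
    rw [hs, mem_erase, mem_erase] at hx
    refine dcot_mul x δ hδ hx.2.1 ?_
    intro hc
    apply hx.1
    have : x = -δ := by linear_combination (norm := ring_nf) hc
    exact this
  rw [Finset.sum_congr rfl hterm, Finset.sum_sub_distrib, ← Finset.mul_sum,
    Finset.sum_sub_distrib, h1, h2, Finset.sum_const, nsmul_eq_mul, mul_one, hcards]
  ring
end

/-! ### Generic quadratic form manipulations -/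

private lemma quad_expand {n : ℕ} (a : Fin n → Fin n → ℝ) (z : Fin n → ℝ) :
    ∑ k : Fin n, (∑ j : Fin n, a k j * z j)^2
      = ∑ j : Fin n, ∑ j' : Fin n, (z j * z j') * (∑ k : Fin n, a k j * a k j') := by
  calc ∑ k : Fin n, (∑ j : Fin n, a k j * z j)^2
      = ∑ k : Fin n, ∑ j : Fin n, ∑ j' : Fin n, (z j * z j') * (a k j * a k j') := by
        apply Finset.sum_congr rfl; intro k _
        rw [sq, Finset.sum_mul_sum]
        apply Finset.sum_congr rfl; intro j _
        apply Finset.sum_congr rfl; intro j' _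
        ring
    _ = ∑ j : Fin n, ∑ k : Fin n, ∑ j' : Fin n, (z j * z j') * (a k j * a k j') :=
        Finset.sum_comm
    _ = ∑ j : Fin n, ∑ j' : Fin n, ∑ k : Fin n, (z j * z j') * (a k j * a k j') := by
        apply Finset.sum_congr rfl; intro j _
        exact Finset.sum_comm
    _ = ∑ j : Fin n, ∑ j' : Fin n, (z j * z j') * (∑ k : Fin n, a k j * a k j') := by
        apply Finset.sum_congr rfl; intro j _
        apply Finset.sum_congr rfl; intro j' _
        rw [Finset.mul_sum]

private lemma ifsum {n : ℕ} (z : Fin n → ℝ) (A B : ℝ) :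
    ∑ j : Fin n, ∑ j' : Fin n, (z j * z j') * (if j = j' then A else B)
      = (A - B) * (∑ j, (z j)^2) + B * (∑ j, z j)^2 := by
  have inner : ∀ j : Fin n, ∑ j' : Fin n, (z j * z j') * (if j = j' then A else B)
      = (z j)^2*(A-B) + B * (z j * ∑ j', z j') := by
    intro j
    have step : ∀ j' : Fin n, (z j * z j') * (if j = j' then A else B)
        = (if j = j' then (z j * z j')*(A - B) else 0) + B*(z j * z j') := by
      intro j'; by_cases h : j = j'
      · subst h; simp; ring
      · simp [h]; ring
    rw [Finset.sum_congr rfl (fun j' _ => step j'), Finset.sum_add_distrib,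
      Finset.sum_ite_eq (univ : Finset (Fin n)) j (fun j' => (z j * z j')*(A - B)),
      if_pos (mem_univ j), ← Finset.mul_sum, ← Finset.mul_sum]
    ring
  rw [Finset.sum_congr rfl (fun j _ => inner j), Finset.sum_add_distrib, ← Finset.sum_mul,
    ← Finset.mul_sum, ← Finset.sum_mul]
  ring

/-! ### The Gram matrices of the two cotangent kernels -/

section
variable {N : ℕ} [NeZero N]

private lemma Gram_c (j j' : Fin N) :
    ∑ k : Fin N, ccot N (((k:ℕ):ZMod N) - ((j:ℕ):ZMod N))
        * ccot N (((k:ℕ):ZMod N) - ((j':ℕ):ZMod N))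
      = if j = j' then (N:ℝ)^2 - N else -(N:ℝ) := by
  have hzm : ∑ k : Fin N, ccot N (((k:ℕ):ZMod N) - ((j:ℕ):ZMod N))
        * ccot N (((k:ℕ):ZMod N) - ((j':ℕ):ZMod N))
      = ∑ y : ZMod N, ccot N (y - ((j:ℕ):ZMod N)) * ccot N (y - ((j':ℕ):ZMod N)) :=
    sum_fin_zmod (fun y => ccot N (y - ((j:ℕ):ZMod N)) * ccot N (y - ((j':ℕ):ZMod N)))
  have hshift : ∑ y : ZMod N, ccot N (y - ((j:ℕ):ZMod N)) * ccot N (y - ((j':ℕ):ZMod N))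
      = ∑ x : ZMod N, ccot N x * ccot N (x + (((j:ℕ):ZMod N) - ((j':ℕ):ZMod N))) := by
    rw [← sum_shift (fun y => ccot N (y - ((j:ℕ):ZMod N)) * ccot N (y - ((j':ℕ):ZMod N)))
      (((j:ℕ):ZMod N))]
    apply Finset.sum_congr rfl; intro x _
    congr 1
    · congr 1; ring
    · congr 1; ring
  rw [hzm, hshift]
  by_cases hjj : j = j'
  · subst hjj
    rw [if_pos rfl, sub_self]
    have : ∀ x : ZMod N, ccot N x * ccot N (x + 0) = (ccot N x)^2 := by
      intro x; rw [add_zero, sq]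
    rw [Finset.sum_congr rfl (fun x _ => this x)]
    exact G_diag
  · rw [if_neg hjj]
    have hδ : (((j:ℕ):ZMod N) - ((j':ℕ):ZMod N)) ≠ 0 := by
      intro h
      apply hjj
      have : ((j:ℕ):ZMod N) = ((j':ℕ):ZMod N) := by
        have := sub_eq_zero.mp h; exact this
      have hv := congrArg ZMod.val this
      rw [ZMod.val_cast_of_lt j.2, ZMod.val_cast_of_lt j'.2] at hv
      exact Fin.ext hv
    exact G_off hδ

private lemma Gram_d (j j' : Fin N) :
    ∑ k : Fin N, dcot N (((k:ℕ):ZMod N) - ((j:ℕ):ZMod N))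
        * dcot N (((k:ℕ):ZMod N) - ((j':ℕ):ZMod N))
      = if j = j' then ((N:ℝ)-1)*((N:ℝ)-2)/3
        else 2*(dcot N (((j:ℕ):ZMod N) - ((j':ℕ):ZMod N)))^2 - ((N:ℝ) - 2) := by
  have hzm : ∑ k : Fin N, dcot N (((k:ℕ):ZMod N) - ((j:ℕ):ZMod N))
        * dcot N (((k:ℕ):ZMod N) - ((j':ℕ):ZMod N))
      = ∑ y : ZMod N, dcot N (y - ((j:ℕ):ZMod N)) * dcot N (y - ((j':ℕ):ZMod N)) :=
    sum_fin_zmod (fun y => dcot N (y - ((j:ℕ):ZMod N)) * dcot N (y - ((j':ℕ):ZMod N)))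
  have hshift : ∑ y : ZMod N, dcot N (y - ((j:ℕ):ZMod N)) * dcot N (y - ((j':ℕ):ZMod N))
      = ∑ x : ZMod N, dcot N x * dcot N (x + (((j:ℕ):ZMod N) - ((j':ℕ):ZMod N))) := by
    rw [← sum_shift (fun y => dcot N (y - ((j:ℕ):ZMod N)) * dcot N (y - ((j':ℕ):ZMod N)))
      (((j:ℕ):ZMod N))]
    apply Finset.sum_congr rfl; intro x _
    congr 1
    · congr 1; ring
    · congr 1; ring
  rw [hzm, hshift]
  by_cases hjj : j = j'
  · subst hjj
    rw [if_pos rfl, sub_self]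
    have : ∀ x : ZMod N, dcot N x * dcot N (x + 0) = (dcot N x)^2 := by
      intro x; rw [add_zero, sq]
    rw [Finset.sum_congr rfl (fun x _ => this x)]
    exact H_diag
  · rw [if_neg hjj]
    have hδ : (((j:ℕ):ZMod N) - ((j':ℕ):ZMod N)) ≠ 0 := by
      intro h
      apply hjj
      have : ((j:ℕ):ZMod N) = ((j':ℕ):ZMod N) := sub_eq_zero.mp h
      have hv := congrArg ZMod.val this
      rw [ZMod.val_cast_of_lt j.2, ZMod.val_cast_of_lt j'.2] at hv
      exact Fin.ext hv
    exact H_off hδ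
end

/-! ### The Laplacian weight function -/

noncomputable def wfun (N : ℕ) (δ : ZMod N) : ℝ := if δ = 0 then 0 else 2*(dcot N δ)^2 + 2

section
variable {N : ℕ} [NeZero N]

private lemma wfun_nonneg (δ : ZMod N) : 0 ≤ wfun N δ := by
  rw [wfun]; split
  · exact le_refl 0
  · positivity

private lemma wfun_sum : ∑ x : ZMod N, wfun N x
    = 2*(((N:ℝ)-1)*((N:ℝ)-2)/3) + 2*((N:ℝ)-1) := by
  have hmem : (0 : ZMod N) ∈ (univ : Finset (ZMod N)) := mem_univ _
  rw [← Finset.add_sum_erase _ (wfun N) hmem, show wfun N 0 = 0 from if_pos rfl]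
  have hcong : ∀ x ∈ (univ : Finset (ZMod N)).erase 0, wfun N x = 2*(dcot N x)^2 + 2 := by
    intro x hx; rw [wfun, if_neg (mem_erase.mp hx).1]
  rw [Finset.sum_congr rfl hcong, Finset.sum_add_distrib, Finset.sum_const,
    Finset.card_erase_of_mem hmem, Finset.card_univ, ZMod.card]
  have hT : ∑ x ∈ (univ : Finset (ZMod N)).erase 0, 2*(dcot N x)^2
      = 2 * ∑ x : ZMod N, (dcot N x)^2 := by
    rw [← Finset.mul_sum]
    congr 1
    rw [← Finset.add_sum_erase _ (fun x => (dcot N x)^2) hmem, dcot_zero]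
    norm_num
  rw [hT, H_diag]
  have h1 : 1 ≤ N := hNpos
  have hc : ((N - 1 : ℕ):ℝ) = (N:ℝ) - 1 := by push_cast [Nat.cast_sub h1]; ring
  rw [nsmul_eq_mul, hc]
  ring

private lemma wfun_row (j : Fin N) :
    ∑ j' : Fin N, wfun N (((j:ℕ):ZMod N) - ((j':ℕ):ZMod N)) = ∑ x : ZMod N, wfun N x :=
  (sum_fin_zmod (fun y => wfun N (((j:ℕ):ZMod N) - y))).trans
    (Fintype.sum_equiv (Equiv.subLeft (((j:ℕ):ZMod N))) _ _ (fun _ => rfl))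

private lemma wfun_col (j' : Fin N) :
    ∑ j : Fin N, wfun N (((j:ℕ):ZMod N) - ((j':ℕ):ZMod N)) = ∑ x : ZMod N, wfun N x :=
  (sum_fin_zmod (fun y => wfun N (y - ((j':ℕ):ZMod N)))).trans
    (Fintype.sum_equiv (Equiv.subRight (((j':ℕ):ZMod N))) _ _ (fun _ => rfl))

private lemma laplace_bound (z : Fin N → ℝ) :
    ∑ j : Fin N, ∑ j' : Fin N, (z j * z j') * wfun N (((j:ℕ):ZMod N) - ((j':ℕ):ZMod N))
      ≤ (∑ x : ZMod N, wfun N x) * ∑ j, (z j)^2 := by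
  set W : ℝ := ∑ x : ZMod N, wfun N x with hW
  set wd : Fin N → Fin N → ℝ := fun j j' => wfun N (((j:ℕ):ZMod N) - ((j':ℕ):ZMod N)) with hwd
  have hpos : (0:ℝ) ≤ ∑ j : Fin N, ∑ j' : Fin N, wd j j' * (z j - z j')^2 :=
    Finset.sum_nonneg fun j _ => Finset.sum_nonneg fun j' _ =>
      mul_nonneg (wfun_nonneg _) (sq_nonneg _)
  have hA : ∑ j : Fin N, ∑ j' : Fin N, wd j j' * (z j)^2 = W * ∑ j, (z j)^2 := by
    have inner : ∀ j : Fin N, ∑ j' : Fin N, wd j j' * (z j)^2 = W * (z j)^2 := by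
      intro j
      rw [← Finset.sum_mul, hwd]
      rw [wfun_row j]
    rw [Finset.sum_congr rfl (fun j _ => inner j), ← Finset.mul_sum]
  have hB : ∑ j : Fin N, ∑ j' : Fin N, wd j j' * (z j')^2 = W * ∑ j, (z j)^2 := by
    rw [Finset.sum_comm]
    have inner : ∀ j' : Fin N, ∑ j : Fin N, wd j j' * (z j')^2 = W * (z j')^2 := by
      intro j'
      rw [← Finset.sum_mul, hwd]
      rw [wfun_col j']
    rw [Finset.sum_congr rfl (fun j' _ => inner j'), ← Finset.mul_sum]
  have hsplit : ∑ j : Fin N, ∑ j' : Fin N, wd j j' * (z j - z j')^2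
      = (∑ j : Fin N, ∑ j' : Fin N, wd j j' * (z j)^2)
        + (∑ j : Fin N, ∑ j' : Fin N, wd j j' * (z j')^2)
        - 2 * ∑ j : Fin N, ∑ j' : Fin N, (z j * z j') * wd j j' := by
    have inner : ∀ j : Fin N, ∑ j' : Fin N, wd j j' * (z j - z j')^2
        = (∑ j' : Fin N, wd j j' * (z j)^2) + (∑ j' : Fin N, wd j j' * (z j')^2)
          - 2 * ∑ j' : Fin N, (z j * z j') * wd j j' := by
      intro j
      calc ∑ j' : Fin N, wd j j' * (z j - z j')^2
          = ∑ j' : Fin N, (wd j j' * (z j)^2 + wd j j' * (z j')^2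
              - 2*((z j * z j') * wd j j')) := Finset.sum_congr rfl fun j' _ => by ring
        _ = _ := by rw [Finset.sum_sub_distrib, Finset.sum_add_distrib, ← Finset.mul_sum]
    rw [Finset.sum_congr rfl (fun j _ => inner j), Finset.sum_sub_distrib,
      Finset.sum_add_distrib, ← Finset.mul_sum]
  rw [hA, hB] at hsplit
  linarith [hpos, hsplit.symm.le, hsplit.le]
end

/-! ### The main theorem -/

/-- The exact `ℓ²` identity and inequality for cotangent sums on the uniformly
distributed mesh. -/
theorem cot_l2_identity (N : ℕ) (hN : 1 ≤ N) (z : Fin N → ℝ) :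
    (∑ k : Fin N, (∑ j : Fin N,
        Real.cot ((((k : ℕ) : ℝ) - ((j : ℕ) : ℝ) + 1/2) * π / (N : ℝ)) * z j) ^ 2
      = (N : ℝ) ^ 2 * ∑ i : Fin N, (z i - (N : ℝ)⁻¹ * ∑ i', z i') ^ 2) ∧
    (2 ≤ N →
      ∑ k : Fin N, (∑ j ∈ Finset.univ.erase k,
          Real.cot ((((k : ℕ) : ℝ) - ((j : ℕ) : ℝ)) * π / (N : ℝ)) * z j) ^ 2
        ≤ (N : ℝ) ^ 2 * ∑ i : Fin N, (z i - (N : ℝ)⁻¹ * ∑ i', z i') ^ 2) := by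
  haveI : NeZero N := ⟨by omega⟩
  have hNR : (N:ℝ) ≠ 0 := Nat.cast_ne_zero.mpr (by omega)
  -- the right-hand side in convenient form
  have hRHS : (N:ℝ)^2 * ∑ i : Fin N, (z i - (N:ℝ)⁻¹ * ∑ i', z i')^2
      = (N:ℝ)^2 * (∑ i, (z i)^2) - (N:ℝ) * (∑ i, z i)^2 := by
    have hexp : ∑ i : Fin N, (z i - (N:ℝ)⁻¹ * ∑ i', z i')^2
        = (∑ i, (z i)^2) - 2*((N:ℝ)⁻¹*(∑ i', z i'))*(∑ i, z i)
          + (N:ℝ)*((N:ℝ)⁻¹*(∑ i', z i'))^2 := by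
      have step : ∀ i : Fin N, (z i - (N:ℝ)⁻¹ * ∑ i', z i')^2
          = ((z i)^2 - 2*((N:ℝ)⁻¹*(∑ i', z i'))*(z i)) + ((N:ℝ)⁻¹*(∑ i', z i'))^2 := by
        intro i; ring
      rw [Finset.sum_congr rfl (fun i _ => step i), Finset.sum_add_distrib,
        Finset.sum_sub_distrib, ← Finset.mul_sum, Finset.sum_const, Finset.card_univ,
        Fintype.card_fin, nsmul_eq_mul]
    rw [hexp]
    field_simp
    ring
  have hSS : ∑ j : Fin N, ∑ j' : Fin N, z j * z j' = (∑ i, z i)^2 := by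
    have inner : ∀ j : Fin N, ∑ j' : Fin N, z j * z j' = z j * ∑ i, z i := by
      intro j; rw [← Finset.mul_sum]
    rw [Finset.sum_congr rfl (fun j _ => inner j), ← Finset.sum_mul, sq]
  constructor
  · -- part 1 : the exact identity
    have hstep : ∀ k : Fin N, ∑ j : Fin N,
        Real.cot ((((k : ℕ) : ℝ) - ((j : ℕ) : ℝ) + 1/2) * π / (N : ℝ)) * z j
        = ∑ j : Fin N, ccot N (((k:ℕ):ZMod N) - ((j:ℕ):ZMod N)) * z j := by
      intro k
      exact Finset.sum_congr rfl fun j _ => by rw [cot_stmt_eq_ccot hN k j]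
    rw [Finset.sum_congr rfl (fun k _ => by rw [hstep k])]
    rw [quad_expand (fun k j => ccot N (((k:ℕ):ZMod N) - ((j:ℕ):ZMod N))) z]
    rw [Finset.sum_congr rfl (fun j _ => Finset.sum_congr rfl (fun j' _ => by
      rw [Gram_c j j']))]
    rw [ifsum z ((N:ℝ)^2 - N) (-(N:ℝ)), hRHS]
    ring
  · -- part 2 : the inequality
    intro hN2
    set T : ℝ := ((N:ℝ)-1)*((N:ℝ)-2)/3 with hT
    -- convert the erased sums to full sums over the dcot kernel
    have hstep : ∀ k : Fin N, ∑ j ∈ Finset.univ.erase k,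
        Real.cot ((((k : ℕ) : ℝ) - ((j : ℕ) : ℝ)) * π / (N : ℝ)) * z j
        = ∑ j : Fin N, dcot N (((k:ℕ):ZMod N) - ((j:ℕ):ZMod N)) * z j := by
      intro k
      have h1 : ∑ j ∈ Finset.univ.erase k,
          Real.cot ((((k : ℕ) : ℝ) - ((j : ℕ) : ℝ)) * π / (N : ℝ)) * z j
          = ∑ j ∈ Finset.univ.erase k, dcot N (((k:ℕ):ZMod N) - ((j:ℕ):ZMod N)) * z j :=
        Finset.sum_congr rfl fun j _ => by rw [cot_stmt_eq_dcot hN k j]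
      rw [h1, Finset.sum_erase_eq_sub (mem_univ k), sub_self, dcot_zero, zero_mul, sub_zero]
    rw [Finset.sum_congr rfl (fun k _ => by rw [hstep k])]
    rw [quad_expand (fun k j => dcot N (((k:ℕ):ZMod N) - ((j:ℕ):ZMod N))) z]
    -- rewrite the Gram entries via the weight function
    have hval : ∀ j j' : Fin N,
        (∑ k : Fin N, dcot N (((k:ℕ):ZMod N) - ((j:ℕ):ZMod N))
          * dcot N (((k:ℕ):ZMod N) - ((j':ℕ):ZMod N)))
        = wfun N (((j:ℕ):ZMod N) - ((j':ℕ):ZMod N)) - (N:ℝ)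
          + (if j = j' then T + N else 0) := by
      intro j j'
      rw [Gram_d j j']
      by_cases h : j = j'
      · subst h
        rw [if_pos rfl, if_pos rfl, sub_self, show wfun N 0 = 0 from if_pos rfl]
        ring
      · have hδ : (((j:ℕ):ZMod N) - ((j':ℕ):ZMod N)) ≠ 0 := by
          intro hc
          apply h
          have heq : ((j:ℕ):ZMod N) = ((j':ℕ):ZMod N) := sub_eq_zero.mp hc
          have hv := congrArg ZMod.val heq
          rw [ZMod.val_cast_of_lt j.2, ZMod.val_cast_of_lt j'.2] at hv
          exact Fin.ext hv
        rw [if_neg h, if_neg h, wfun, if_neg hδ]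
        ring
    rw [Finset.sum_congr rfl (fun j _ => Finset.sum_congr rfl (fun j' _ => by
      rw [hval j j']))]
    -- split into three double sums
    have hsplit : ∑ j : Fin N, ∑ j' : Fin N, (z j * z j')
        * (wfun N (((j:ℕ):ZMod N) - ((j':ℕ):ZMod N)) - (N:ℝ) + (if j = j' then T + N else 0))
        = (∑ j : Fin N, ∑ j' : Fin N, (z j * z j') * wfun N (((j:ℕ):ZMod N) - ((j':ℕ):ZMod N)))
          - (N:ℝ) * (∑ i, z i)^2 + (T + N) * (∑ i, (z i)^2) := by
      have per : ∀ j j' : Fin N, (z j * z j')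
          * (wfun N (((j:ℕ):ZMod N) - ((j':ℕ):ZMod N)) - (N:ℝ) + (if j = j' then T + N else 0))
          = (z j * z j') * wfun N (((j:ℕ):ZMod N) - ((j':ℕ):ZMod N))
            - (N:ℝ) * (z j * z j') + (z j * z j') * (if j = j' then T + N else 0) := by
        intro j j'; ring
      rw [Finset.sum_congr rfl (fun j _ => Finset.sum_congr rfl (fun j' _ => per j j'))]
      have inner : ∀ j : Fin N, ∑ j' : Fin N,
          ((z j * z j') * wfun N (((j:ℕ):ZMod N) - ((j':ℕ):ZMod N))
            - (N:ℝ) * (z j * z j') + (z j * z j') * (if j = j' then T + N else 0))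
          = (∑ j' : Fin N, (z j * z j') * wfun N (((j:ℕ):ZMod N) - ((j':ℕ):ZMod N)))
            - (N:ℝ) * (∑ j' : Fin N, z j * z j')
            + (∑ j' : Fin N, (z j * z j') * (if j = j' then T + N else 0)) := by
        intro j
        rw [Finset.sum_add_distrib, Finset.sum_sub_distrib, ← Finset.mul_sum]
      rw [Finset.sum_congr rfl (fun j _ => inner j), Finset.sum_add_distrib,
        Finset.sum_sub_distrib, ← Finset.mul_sum, hSS]
      have hite := ifsum z (T + N) 0
      simp only [sub_zero, mul_zero, add_zero] at hite
      rw [hite]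
      ring
    rw [hsplit, hRHS]
    have hW := wfun_sum (N := N)
    have hlap := laplace_bound (N := N) z
    rw [hW] at hlap
    have hfinal : (2*(((N:ℝ)-1)*((N:ℝ)-2)/3) + 2*((N:ℝ)-1)) * (∑ j, (z j)^2)
        - (N:ℝ) * (∑ i, z i)^2 + (T + N) * (∑ i, (z i)^2)
        = (N:ℝ)^2 * (∑ i, (z i)^2) - (N:ℝ) * (∑ i, z i)^2 := by
      rw [hT]; ring
    linarith [hlap]
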